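/- Let X and Y be real random variables and c_X, c_Y nonzero constants such that P(|X - c_X| ≥ ε) ≤ K e^{-r_X ε²} and P(|Y - c_Y| ≥ ε) ≤ K e^{-r_Y ε²} for all ε ∈ (0,1). Then for all ε ∈ (0,1), P(|XY - c_X c_Y| ≥ ε) ≤ 2K exp( -min{r_X, r_Y} ε² / (9 max(1, c_X², c_Y²)) ). -/
import Mathlib


open MeasureTheory

/-- Concentration of products: if `X` concentrates on `c_X` and `Y` concentrates on `c_Y`
with rates `r_X, r_Y` and prefactor `K`, then `XY` concentrates on `c_X c_Y`. -/
theorem concentration_of_products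
    {Ω : Type*} [MeasurableSpace Ω] (μ : Measure Ω) [IsProbabilityMeasure μ]
    (X Y : Ω → ℝ) (cX cY K rX rY : ℝ)
    (hcX : cX ≠ 0) (hcY : cY ≠ 0) (hK : 0 < K) (hrX : 0 < rX) (hrY : 0 < rY)
    (hX : ∀ ε : ℝ, 0 < ε → ε < 1 →
      μ {ω | ε ≤ |X ω - cX|} ≤ ENNReal.ofReal (K * Real.exp (-rX * ε ^ 2)))
    (hY : ∀ ε : ℝ, 0 < ε → ε < 1 →
      μ {ω | ε ≤ |Y ω - cY|} ≤ ENNReal.ofReal (K * Real.exp (-rY * ε ^ 2))) :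
    ∀ ε : ℝ, 0 < ε → ε < 1 →
      μ {ω | ε ≤ |X ω * Y ω - cX * cY|} ≤
        ENNReal.ofReal (2 * K *
          Real.exp (-(min rX rY) * ε ^ 2 / (9 * max 1 (max (cX ^ 2) (cY ^ 2))))) := by
  intro ε hε0 hε1
  set M := max 1 (max (cX ^ 2) (cY ^ 2)) with hMdef
  have hM1 : (1:ℝ) ≤ M := le_max_left _ _
  have hM0 : (0:ℝ) < M := lt_of_lt_of_le one_pos hM1
  set s := Real.sqrt M with hs
  have hs1 : (1:ℝ) ≤ s := by
    rw [hs, show (1:ℝ) = Real.sqrt 1 by simp]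
    exact Real.sqrt_le_sqrt hM1
  have hs0 : (0:ℝ) < s := lt_of_lt_of_le one_pos hs1
  have hssq : s ^ 2 = M := Real.sq_sqrt hM0.le
  have hcXs : |cX| ≤ s := by
    have h1 : cX ^ 2 ≤ M := le_trans (le_max_left _ _) (le_max_right _ _)
    calc |cX| = Real.sqrt (cX ^ 2) := (Real.sqrt_sq_eq_abs cX).symm
      _ ≤ Real.sqrt M := Real.sqrt_le_sqrt h1
  have hcYs : |cY| ≤ s := by
    have h1 : cY ^ 2 ≤ M := le_trans (le_max_right _ _) (le_max_right _ _)
    calc |cY| = Real.sqrt (cY ^ 2) := (Real.sqrt_sq_eq_abs cY).symm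
      _ ≤ Real.sqrt M := Real.sqrt_le_sqrt h1
  set δ := ε / (3 * s) with hδ
  have hδ0 : 0 < δ := div_pos hε0 (by positivity)
  have hδ3s : δ * (3 * s) = ε := by
    rw [hδ]; field_simp
  have hδ1 : δ < 1 := by
    rw [hδ, div_lt_one (by positivity)]
    nlinarith
  have hδs : δ ≤ s := by nlinarith
  have hδsq : δ ^ 2 = ε ^ 2 / (9 * M) := by
    rw [hδ, div_pow, mul_pow, ← hssq]; norm_num
  have hsub : {ω | ε ≤ |X ω * Y ω - cX * cY|} ⊆
      {ω | δ ≤ |X ω - cX|} ∪ {ω | δ ≤ |Y ω - cY|} := by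
    intro ω hω
    by_contra h
    simp only [Set.mem_union, Set.mem_setOf_eq, not_or, not_le] at h
    obtain ⟨h1, h2⟩ := h
    have habs : |X ω * Y ω - cX * cY| ≤
        |X ω - cX| * |Y ω - cY| + |cY| * |X ω - cX| + |cX| * |Y ω - cY| := by
      calc |X ω * Y ω - cX * cY|
          = |(X ω - cX) * (Y ω - cY) + cY * (X ω - cX) + cX * (Y ω - cY)| := by
            ring_nf
        _ ≤ |(X ω - cX) * (Y ω - cY) + cY * (X ω - cX)| + |cX * (Y ω - cY)| :=
            abs_add_le _ _
        _ ≤ |(X ω - cX) * (Y ω - cY)| + |cY * (X ω - cX)| + |cX * (Y ω - cY)| := by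
            gcongr; exact abs_add_le _ _
        _ = |X ω - cX| * |Y ω - cY| + |cY| * |X ω - cX| + |cX| * |Y ω - cY| := by
            rw [abs_mul, abs_mul, abs_mul]
    have hXa := abs_nonneg (X ω - cX)
    have hYa := abs_nonneg (Y ω - cY)
    have hlt : |X ω * Y ω - cX * cY| < ε := by nlinarith
    have := Set.mem_setOf_eq ▸ hω
    linarith
  have hδlt1 := hδ1
  have key1 := hX δ hδ0 hδ1
  have key2 := hY δ hδ0 hδ1
  calc μ {ω | ε ≤ |X ω * Y ω - cX * cY|}
      ≤ μ ({ω | δ ≤ |X ω - cX|} ∪ {ω | δ ≤ |Y ω - cY|}) := measure_mono hsub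
    _ ≤ μ {ω | δ ≤ |X ω - cX|} + μ {ω | δ ≤ |Y ω - cY|} := measure_union_le _ _
    _ ≤ ENNReal.ofReal (K * Real.exp (-rX * δ ^ 2)) +
        ENNReal.ofReal (K * Real.exp (-rY * δ ^ 2)) := add_le_add key1 key2
    _ = ENNReal.ofReal (K * Real.exp (-rX * δ ^ 2) + K * Real.exp (-rY * δ ^ 2)) := by
        rw [ENNReal.ofReal_add (by positivity) (by positivity)]
    _ ≤ ENNReal.ofReal (2 * K * Real.exp (-(min rX rY) * ε ^ 2 / (9 * M))) := by
        apply ENNReal.ofReal_le_ofReal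
        have hrew : -(min rX rY) * ε ^ 2 / (9 * M) = -(min rX rY) * δ ^ 2 := by
          rw [hδsq]; ring
        rw [hrew]
        have e1 : Real.exp (-rX * δ ^ 2) ≤ Real.exp (-(min rX rY) * δ ^ 2) := by
          apply Real.exp_le_exp.mpr
          nlinarith [min_le_left rX rY, sq_nonneg δ]
        have e2 : Real.exp (-rY * δ ^ 2) ≤ Real.exp (-(min rX rY) * δ ^ 2) := by
          apply Real.exp_le_exp.mpr
          nlinarith [min_le_right rX rY, sq_nonneg δ]
        nlinarith [Real.exp_pos (-(min rX rY) * δ ^ 2)]
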